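/- If 2b is a nonnegative integer, the quotient of the sl₂-module M_b by the submodule S = ℂ[h]·∏_{j=0}^{2b}(h+b-j) is a simple highest weight module isomorphic to L(2b), the finite dimensional simple module of highest weight 2b; in particular its dimension is 2b+1 and the image of ∏_{j=0}^{2b-1}(h+b-j) is a highest weight vector of weight 2b. -/

import Mathlib

/-!
Write `Q = ∏_{j ≤ 2b} (X + b - j)`. The quotient `ℂ[X] ⧸ (Q)` has dimension `deg Q = 2b + 1`, and
`e` sends `w = ∏_{j < 2b} (X + b - j)` to `Q`. A subspace `V ⊇ (Q)` stable under multiplication by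
`h` is an ideal `(g)` with `g ∣ Q`, so the roots of `g` lie among the `j - b`, `0 ≤ j ≤ 2b`.
Stability under `e` and `f` makes this root set closed under `j ↦ j - 1` (the factor `X + b` of `e`
vanishes only at `-b`) and under `j ↦ j + 1` for `j < 2b` (the factor `X - b` of `f` vanishes only
at `b = 2b - b`). Hence `g` is either a unit or has every root of `Q`, i.e. `V = ⊤` or `V = (Q)`.
-/

open Polynomial

namespace Polynomial

theorem IsRoot.eval_of_dvd_mul_comp {R : Type*} [CommRing R] [IsDomain R] {g p q : R[X]} {z : R}
    (hdvd : g ∣ p * g.comp q) (hz : g.IsRoot z) (hp : ¬p.IsRoot z) : g.IsRoot (q.eval z) := by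
  obtain ⟨c, hc⟩ := hdvd
  have h := congr_arg (eval z) hc
  rw [eval_mul, eval_mul, hz.eq_zero, zero_mul, eval_comp] at h
  exact (mul_eq_zero.mp h).resolve_left hp

theorem mul_mem_of_forall_X_mul_mem {R : Type*} [CommSemiring R] {V : Submodule R R[X]}
    (hX : ∀ f ∈ V, X * f ∈ V) (p : R[X]) {f : R[X]} (hf : f ∈ V) : p * f ∈ V := by
  induction p using Polynomial.induction_on with
  | C a => rw [← smul_eq_C_mul]; exact V.smul_mem a hf
  | add p q hp hq => rw [add_mul]; exact V.add_mem hp hq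
  | monomial n a ih => convert hX _ ih using 1; ring

theorem exists_forall_mem_iff_dvd {K : Type*} [Field K] {V : Submodule K K[X]}
    (hX : ∀ f ∈ V, X * f ∈ V) : ∃ g : K[X], ∀ p, p ∈ V ↔ g ∣ p := by
  let I : Ideal K[X] :=
    { V.toAddSubmonoid with smul_mem' := fun p _ hf => mul_mem_of_forall_X_mul_mem hX p hf }
  obtain ⟨g, hg⟩ := IsPrincipalIdealRing.principal I
  refine ⟨g, fun p => ?_⟩
  change p ∈ I ↔ _
  rw [hg, Ideal.submodule_span_eq, Ideal.mem_span_singleton]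

section ShiftedDescPochhammer

variable {R : Type*} [CommRing R]

/-- `(descPochhammer R n).comp (X + C b)`, written as the product `∏_{j<n} (X + b - j)`. -/
noncomputable def shiftedDescPochhammer (b : R) (n : ℕ) : R[X] :=
  ∏ j ∈ Finset.range n, (X + C b - C (j : R))

theorem shiftedDescPochhammer_eq_prod_X_sub_C (b : R) (n : ℕ) :
    shiftedDescPochhammer b n = ∏ j ∈ Finset.range n, (X - C ((j : R) - b)) :=
  Finset.prod_congr rfl fun j _ => by rw [C_sub]; ring

theorem shiftedDescPochhammer_succ (b : R) (n : ℕ) :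
    shiftedDescPochhammer b (n + 1) = shiftedDescPochhammer b n * (X + C b - C (n : R)) :=
  Finset.prod_range_succ _ n

theorem X_add_C_mul_shiftedDescPochhammer_comp (b : R) (n : ℕ) :
    (X + C b) * (shiftedDescPochhammer b n).comp (X - 1) = shiftedDescPochhammer b (n + 1) := by
  rw [shiftedDescPochhammer, shiftedDescPochhammer, Finset.prod_range_succ', prod_comp,
    Nat.cast_zero, C_0, sub_zero, mul_comm]
  congr 1
  refine Finset.prod_congr rfl fun j _ => ?_
  simp only [sub_comp, add_comp, X_comp, C_comp, Nat.cast_succ, C_add, C_1]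
  ring

theorem monic_shiftedDescPochhammer [Nontrivial R] (b : R) (n : ℕ) :
    (shiftedDescPochhammer b n).Monic := by
  rw [shiftedDescPochhammer_eq_prod_X_sub_C]
  exact monic_prod_of_monic _ _ fun j _ => monic_X_sub_C _

theorem natDegree_shiftedDescPochhammer [Nontrivial R] (b : R) (n : ℕ) :
    (shiftedDescPochhammer b n).natDegree = n := by
  rw [shiftedDescPochhammer_eq_prod_X_sub_C,
    natDegree_prod_of_monic _ _ fun j _ => monic_X_sub_C _]
  simp only [natDegree_X_sub_C, Finset.sum_const, Finset.card_range, smul_eq_mul, mul_one]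

theorem isRoot_shiftedDescPochhammer_iff [IsDomain R] {b z : R} {n : ℕ} :
    (shiftedDescPochhammer b n).IsRoot z ↔ ∃ j < n, z = j - b := by
  simp [shiftedDescPochhammer_eq_prod_X_sub_C, IsRoot, eval_prod, Finset.prod_eq_zero_iff,
    sub_eq_zero]

theorem shiftedDescPochhammer_dvd {K : Type*} [Field K] [CharZero K] {b : K} {n : ℕ} {g : K[X]}
    (h : ∀ j < n, g.IsRoot ((j : K) - b)) : shiftedDescPochhammer b n ∣ g := by
  rw [shiftedDescPochhammer_eq_prod_X_sub_C]
  have hinj : Function.Injective fun j : ℕ => (j : K) - b := fun i j hij => by simpa using hij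
  refine Finset.prod_dvd_of_coprime ((pairwise_coprime_X_sub_C hinj).set_pairwise _) fun j hj => ?_
  exact dvd_iff_isRoot.mpr (h j (Finset.mem_range.mp hj))

end ShiftedDescPochhammer

section Simplicity

variable {K : Type*} [Field K] [CharZero K] {b : K} {m : ℕ}

theorem shiftedDescPochhammer_dvd_of_shift_dvd (hb : 2 * b = m) {g : K[X]}
    (hroot : ∃ z, g.IsRoot z) (hgQ : g ∣ shiftedDescPochhammer b (m + 1))
    (hE : g ∣ (X + C b) * g.comp (X - 1)) (hF : g ∣ (X - C b) * g.comp (X + 1)) :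
    shiftedDescPochhammer b (m + 1) ∣ g := by
  have down (t : ℕ) (ht : g.IsRoot ((t + 1 : ℕ) - b)) : g.IsRoot ((t : K) - b) := by
    have hp : ¬(X + C b).IsRoot (((t + 1 : ℕ) : K) - b) := by
      simpa [IsRoot] using Nat.cast_add_one_ne_zero (R := K) t
    have h := ht.eval_of_dvd_mul_comp hE hp
    rwa [eval_sub, eval_X, eval_one, sub_right_comm, Nat.cast_add_one, add_sub_cancel_right] at h
  have up (t : ℕ) (htm : t < m) (ht : g.IsRoot ((t : K) - b)) : g.IsRoot ((t + 1 : ℕ) - b) := by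
    -- `X - b` vanishes at `t - b` only for `t = 2b = m`
    have hp : ¬(X - C b).IsRoot ((t : K) - b) := by
      rw [IsRoot, eval_sub, eval_X, eval_C, sub_sub, ← two_mul, hb, sub_eq_zero, Nat.cast_inj]
      exact htm.ne
    have h := ht.eval_of_dvd_mul_comp hF hp
    rwa [eval_add, eval_X, eval_one, sub_add_eq_add_sub, ← Nat.cast_add_one] at h
  have hbottom : g.IsRoot ((0 : ℕ) - b) := by
    obtain ⟨z, hz⟩ := hroot
    obtain ⟨t, -, rfl⟩ := isRoot_shiftedDescPochhammer_iff.mp (hz.dvd hgQ)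
    induction t with
    | zero => exact hz
    | succ t ih => exact ih (down t hz)
  have hall (t : ℕ) (ht : t ≤ m) : g.IsRoot ((t : K) - b) := by
    induction t with
    | zero => exact hbottom
    | succ t ih => exact up t ht (ih (by omega))
  exact shiftedDescPochhammer_dvd fun j hj => hall j (by omega)

theorem eq_or_eq_top_of_shift_stable [IsAlgClosed K] (hb : 2 * b = m) {V : Submodule K K[X]}
    (hSV : (Ideal.span {shiftedDescPochhammer b (m + 1)}).restrictScalars K ≤ V)
    (hX : ∀ f ∈ V, X * f ∈ V) (hE : ∀ f ∈ V, (X + C b) * f.comp (X - 1) ∈ V)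
    (hF : ∀ f ∈ V, -(X - C b) * f.comp (X + 1) ∈ V) :
    V = (Ideal.span {shiftedDescPochhammer b (m + 1)}).restrictScalars K ∨ V = ⊤ := by
  obtain ⟨g, hg⟩ := exists_forall_mem_iff_dvd hX
  have hgV : g ∈ V := (hg g).2 dvd_rfl
  have hgQ : g ∣ shiftedDescPochhammer b (m + 1) :=
    (hg _).1 (hSV (Ideal.mem_span_singleton_self _))
  by_cases hu : IsUnit g
  · exact Or.inr (eq_top_iff.2 fun p _ => (hg p).2 hu.dvd)
  · have hroot : ∃ z, g.IsRoot z :=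
      IsAlgClosed.exists_root g fun h => hu (isUnit_iff_degree_eq_zero.2 h)
    have hF' : g ∣ (X - C b) * g.comp (X + 1) := by
      simpa only [neg_mul, dvd_neg] using (hg _).1 (hF g hgV)
    have hQg := shiftedDescPochhammer_dvd_of_shift_dvd hb hroot hgQ ((hg _).1 (hE g hgV)) hF'
    exact Or.inl (le_antisymm (fun p hp => Ideal.mem_span_singleton.2 (hQg.trans ((hg p).1 hp)))
      hSV)

end Simplicity

end Polynomial

/-- If `2b ∈ ℕ₀`, the quotient of `M_b` by the submodule `S = ℂ[h]·∏_{j=0}^{2b}(h+b-j)`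
is a simple module of dimension `2b+1`, and the image of `w = ∏_{j=0}^{2b-1}(h+b-j)`
is a nonzero highest weight vector of weight `2b` (killed by `e`, and `2h·w = 2b·w`
in the quotient); i.e. the quotient is the finite dimensional simple `sl₂`-module
`L(2b)` of highest weight `2b`. -/
theorem Mb_quotient_is_L2b (b : ℂ) (m : ℕ) (hb : 2 * b = (m : ℂ)) :
    let Q : ℂ[X] := ∏ j ∈ Finset.range (m + 1), (X + C b - C (j : ℂ))
    let S : Submodule ℂ ℂ[X] := Submodule.restrictScalars ℂ (Ideal.span {Q})
    let w : ℂ[X] := ∏ j ∈ Finset.range m, (X + C b - C (j : ℂ))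
    Module.finrank ℂ (ℂ[X] ⧸ S) = m + 1 ∧
    w ∉ S ∧
    (X + C b) * w.comp (X - 1) ∈ S ∧
    2 * X * w - C (2 * b) * w ∈ S ∧
    (∀ V : Submodule ℂ ℂ[X], S ≤ V →
      (∀ f ∈ V, X * f ∈ V) →
      (∀ f ∈ V, (X + C b) * f.comp (X - 1) ∈ V) →
      (∀ f ∈ V, -(X - C b) * f.comp (X + 1) ∈ V) →
      V = S ∨ V = ⊤) := by
  intro Q S w
  have hQ : Q = shiftedDescPochhammer b (m + 1) := rfl
  have hw : w = shiftedDescPochhammer b m := rfl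
  clear_value Q w
  subst hQ hw
  have hS (p : ℂ[X]) : p ∈ S ↔ shiftedDescPochhammer b (m + 1) ∣ p :=
    Ideal.mem_span_singleton
  -- at `m = 2b` the last factor `X + b - m` is `X - b`
  have hQ : shiftedDescPochhammer b (m + 1) = shiftedDescPochhammer b m * (X - C b) := by
    rw [shiftedDescPochhammer_succ, ← hb, C_mul, map_ofNat]; ring
  refine ⟨?_, ?_, ?_, ?_, fun V => eq_or_eq_top_of_shift_stable hb⟩
  · rw [(Submodule.Quotient.restrictScalarsEquiv ℂ _).finrank_eq,
      finrank_quotient_span_eq_natDegree, natDegree_shiftedDescPochhammer]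
  · rw [hS]
    intro hdvd
    have := natDegree_le_of_dvd hdvd (monic_shiftedDescPochhammer b m).ne_zero
    rw [natDegree_shiftedDescPochhammer, natDegree_shiftedDescPochhammer] at this
    omega
  · rw [X_add_C_mul_shiftedDescPochhammer_comp, hS]
  · rw [hS, hQ]
    exact ⟨C 2, by rw [C_mul, map_ofNat]; ring⟩
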